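/- arXiv:1904.12853 — 4 statements merged into one kernel-verified Lean document; each statement's English description precedes it below -/
import Mathlib

section
/- Let w be a weight structure on a triangulated category C. Then C_{w≥0} = (C_{w≤-1})^⊥, i.e., an object Y belongs to C_{w≥0} if and only if Hom(X, Y) = 0 for all X ∈ C_{w≤-1}. -/
open CategoryTheory Limits Pretriangulated

structure WeightStructure (C : Type*) [Category C] [Preadditive C] [HasZeroObject C]
    [HasShift C ℤ] [∀ n : ℤ, (CategoryTheory.shiftFunctor C n).Additive] [Pretriangulated C] where
  le : Set C
  ge : Set C
  le_retract : ∀ ⦃X Y : C⦄, Y ∈ le → ∀ (i : X ⟶ Y) (r : Y ⟶ X), i ≫ r = 𝟙 X → X ∈ le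
  ge_retract : ∀ ⦃X Y : C⦄, Y ∈ ge → ∀ (i : X ⟶ Y) (r : Y ⟶ X), i ≫ r = 𝟙 X → X ∈ ge
  le_shift : ∀ ⦃X : C⦄, X ∈ le → X⟦(-1 : ℤ)⟧ ∈ le
  ge_shift : ∀ ⦃X : C⦄, X ∈ ge → X⟦(1 : ℤ)⟧ ∈ ge
  orth : ∀ ⦃X Y : C⦄, X ∈ le → Y ∈ ge → ∀ f : X ⟶ Y⟦(1 : ℤ)⟧, f = 0
  decomp : ∀ M : C, ∃ (L R : C) (f : L ⟶ M) (g : M ⟶ R) (δ : R ⟶ L⟦(1 : ℤ)⟧),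
    (Triangle.mk f g δ ∈ distTriang C) ∧ L ∈ le ∧ R⟦(-1 : ℤ)⟧ ∈ ge

namespace WeightStructure

variable {C : Type*} [Category C] [Preadditive C] [HasZeroObject C]
  [HasShift C ℤ] [∀ n : ℤ, (CategoryTheory.shiftFunctor C n).Additive] [Pretriangulated C]
  (w : WeightStructure C)

/-- The class `C_{w ≤ n} = C_{w≤0}[n]`. -/
def Le (n : ℤ) : Set C := {X | X⟦(-n)⟧ ∈ w.le}

/-- The class `C_{w ≥ n} = C_{w≥0}[n]`. -/
def Ge (n : ℤ) : Set C := {X | X⟦(-n)⟧ ∈ w.ge}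

/-- `f, g, δ` form a `k`-weight decomposition triangle of `M`. -/
def IsWeightDecomp (k : ℤ) {A M B : C} (f : A ⟶ M) (g : M ⟶ B) (δ : B ⟶ A⟦(1 : ℤ)⟧) : Prop :=
  (Triangle.mk f g δ ∈ distTriang C) ∧ A ∈ w.Le k ∧ B ∈ w.Ge (k + 1)

/-- `g : M ⟶ N` kills weights `m,…,n`. -/
def KillsWeights (m n : ℤ) {M N : C} (g : M ⟶ N) : Prop :=
  ∃ (A B A' B' : C) (a : A ⟶ M) (b : M ⟶ B) (δ : B ⟶ A⟦(1 : ℤ)⟧)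
    (a' : A' ⟶ N) (b' : N ⟶ B') (δ' : B' ⟶ A'⟦(1 : ℤ)⟧),
    w.IsWeightDecomp n a b δ ∧ w.IsWeightDecomp (m - 1) a' b' δ' ∧ a ≫ g ≫ b' = 0

/-- `M` is without weights `m,…,n`. -/
def WithoutWeights (m n : ℤ) (M : C) : Prop := w.KillsWeights m n (𝟙 M)

end WeightStructure

/-! One inclusion is orthogonality, shifted once. Conversely, if `Y` is right orthogonal to
`C_{w≤-1}`, take a weight decomposition `L → Y[1] → R → L[1]`: shifting the first map by `-1`
gives a map `L[-1] → Y` with `L[-1] ∈ C_{w≤-1}`, so it vanishes. Then `Y[1]` is a retract of `R`,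
whence `Y` is a retract of `R[-1] ∈ C_{w≥0}`. -/

namespace WeightStructure

variable {C : Type*} [Category C] [Preadditive C] [HasZeroObject C]
  [HasShift C ℤ] [∀ n : ℤ, (CategoryTheory.shiftFunctor C n).Additive] [Pretriangulated C]
  (w : WeightStructure C)

lemma mem_le_of_retract {X Y : C} (h : Retract X Y) (hY : Y ∈ w.le) : X ∈ w.le :=
  w.le_retract hY h.i h.r h.retract

lemma mem_ge_of_retract {X Y : C} (h : Retract X Y) (hY : Y ∈ w.ge) : X ∈ w.ge :=
  w.ge_retract hY h.i h.r h.retract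

lemma mem_Ge_zero_iff {Y : C} : Y ∈ w.Ge 0 ↔ Y ∈ w.ge := by
  simp only [Ge, neg_zero, Set.mem_ofPred_eq]
  exact ⟨w.mem_ge_of_retract ((shiftFunctorZero C ℤ).app Y).symm.retract,
    w.mem_ge_of_retract ((shiftFunctorZero C ℤ).app Y).retract⟩

lemma mem_Le_neg_one_iff {X : C} : X ∈ w.Le (-1) ↔ X⟦(1 : ℤ)⟧ ∈ w.le := Iff.rfl

lemma shift_neg_one_mem_Le_neg_one {L : C} (hL : L ∈ w.le) : L⟦(-1 : ℤ)⟧ ∈ w.Le (-1) :=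
  w.mem_Le_neg_one_iff.2 <|
    w.mem_le_of_retract ((shiftFunctorCompIsoId C (-1 : ℤ) 1 (by norm_num)).app L).retract hL

lemma eq_zero_of_mem_Le_neg_one_of_mem_ge {X Y : C} (hX : X ∈ w.Le (-1)) (hY : Y ∈ w.ge)
    (f : X ⟶ Y) : f = 0 :=
  (shiftFunctor C (1 : ℤ)).map_eq_zero_iff.1 (w.orth (w.mem_Le_neg_one_iff.1 hX) hY _)

lemma mem_ge_of_forall_hom_eq_zero {Y : C} (hY : ∀ X ∈ w.Le (-1), ∀ f : X ⟶ Y, f = 0) :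
    Y ∈ w.ge := by
  obtain ⟨L, R, f, g, δ, hT, hL, hR⟩ := w.decomp (Y⟦(1 : ℤ)⟧)
  have hf : f = 0 := by
    have h := hY _ (w.shift_neg_one_mem_Le_neg_one hL)
      (f⟦(-1 : ℤ)⟧' ≫ ((shiftFunctorCompIsoId C (1 : ℤ) (-1) (by norm_num)).app Y).hom)
    rwa [Preadditive.IsIso.comp_right_eq_zero, Functor.map_eq_zero_iff] at h
  have : Mono g := Triangle.mono₂ _ hT hf
  have := isSplitMono_of_mono g
  have hY₁ : (Y⟦(1 : ℤ)⟧)⟦(-1 : ℤ)⟧ ∈ w.ge :=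
    w.mem_ge_of_retract ((Retract.mk g (retraction g) (IsSplitMono.id g)).map _) hR
  exact w.mem_ge_of_retract
    ((shiftFunctorCompIsoId C (1 : ℤ) (-1) (by norm_num)).app Y).symm.retract hY₁

end WeightStructure

/-- `C_{w≥0} = (C_{w≤-1})^⊥`. -/
theorem ge_eq_perp_le_neg_one {C : Type*} [Category C] [Preadditive C] [HasZeroObject C]
    [HasShift C ℤ] [∀ n : ℤ, (CategoryTheory.shiftFunctor C n).Additive] [Pretriangulated C]
    (w : WeightStructure C) :
    w.Ge 0 = {Y : C | ∀ X ∈ w.Le (-1), ∀ f : X ⟶ Y, f = 0} := by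
  ext Y
  exact ⟨fun hY X hX f => w.eq_zero_of_mem_Le_neg_one_of_mem_ge hX (w.mem_Ge_zero_iff.1 hY) f,
    fun hY => w.mem_Ge_zero_iff.2 (w.mem_ge_of_forall_hom_eq_zero hY)⟩
end

section
/- Let w be a weight structure on a triangulated category C, let m ≤ n be integers, and let g : M → N. Then the following conditions are equivalent: (1) there exist an n-weight decomposition of M and an (m−1)-weight decomposition of N such that the composite w_{≤n}M → M → N → w_{≥m}N vanishes; (2) there exist choices of w_{≤n}M and w_{≤m-1}N and a morphism h : w_{≤n}M → w_{≤m-1}N such that the square with the canonical morphisms w_{≤n}M → M, w_{≤m-1}N → N and with g commutes; (3) there exist choices of w_{≥n+1}M and w_{≥m}N and a morphism j : w_{≥n+1}M → w_{≥m}N such that the square with the canonical morphisms M → w_{≥n+1}M, N → w_{≥m}N and with g commutes. -/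
open CategoryTheory Limits Pretriangulated

/-! The three conditions are read off the same pair of weight decompositions: `a ≫ g` factors
through `w_{≤m-1}N → N` exactly when it dies in `w_{≥m}N`, and `g ≫ b'` factors through
`M → w_{≥n+1}M` exactly when it dies on `w_{≤n}M`, by exactness of `Hom(X, -)` and `Hom(-, X)`
on distinguished triangles. -/

namespace CategoryTheory.Pretriangulated.Triangle

variable {C : Type*} [Category C] [Preadditive C] [HasZeroObject C] [HasShift C ℤ]
  [∀ n : ℤ, (CategoryTheory.shiftFunctor C n).Additive] [Pretriangulated C]
  {T : Triangle C} (hT : T ∈ distTriang C)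
include hT

lemma comp_mor₂_eq_zero_iff {X : C} (f : X ⟶ T.obj₂) :
    f ≫ T.mor₂ = 0 ↔ ∃ h : X ⟶ T.obj₁, h ≫ T.mor₁ = f := by
  refine ⟨fun hf => ?_, fun ⟨h, hh⟩ => ?_⟩
  · obtain ⟨h, hh⟩ := coyoneda_exact₂ T hT f hf
    exact ⟨h, hh.symm⟩
  · rw [← hh, Category.assoc, comp_distTriang_mor_zero₁₂ T hT, comp_zero]

lemma mor₁_comp_eq_zero_iff {X : C} (f : T.obj₂ ⟶ X) :
    T.mor₁ ≫ f = 0 ↔ ∃ j : T.obj₃ ⟶ X, T.mor₂ ≫ j = f := by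
  refine ⟨fun hf => ?_, fun ⟨j, hj⟩ => ?_⟩
  · obtain ⟨j, hj⟩ := yoneda_exact₂ T hT f hf
    exact ⟨j, hj.symm⟩
  · rw [← hj, ← Category.assoc, comp_distTriang_mor_zero₁₂ T hT, zero_comp]

end CategoryTheory.Pretriangulated.Triangle

/-- equivalent characterizations of morphisms killing weights `m,…,n`. -/
theorem killsWeights_iff {C : Type*} [Category C] [Preadditive C] [HasZeroObject C]
    [HasShift C ℤ] [∀ n : ℤ, (CategoryTheory.shiftFunctor C n).Additive] [Pretriangulated C]
    (w : WeightStructure C) (m n : ℤ) (hmn : m ≤ n) {M N : C} (g : M ⟶ N) :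
    (w.KillsWeights m n g ↔
      ∃ (A B A' B' : C) (a : A ⟶ M) (b : M ⟶ B) (δ : B ⟶ A⟦(1 : ℤ)⟧)
        (a' : A' ⟶ N) (b' : N ⟶ B') (δ' : B' ⟶ A'⟦(1 : ℤ)⟧),
        w.IsWeightDecomp n a b δ ∧ w.IsWeightDecomp (m - 1) a' b' δ' ∧
          ∃ h : A ⟶ A', h ≫ a' = a ≫ g) ∧
    (w.KillsWeights m n g ↔
      ∃ (A B A' B' : C) (a : A ⟶ M) (b : M ⟶ B) (δ : B ⟶ A⟦(1 : ℤ)⟧)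
        (a' : A' ⟶ N) (b' : N ⟶ B') (δ' : B' ⟶ A'⟦(1 : ℤ)⟧),
        w.IsWeightDecomp n a b δ ∧ w.IsWeightDecomp (m - 1) a' b' δ' ∧
          ∃ j : B ⟶ B', b ≫ j = g ≫ b') := by
  refine ⟨⟨?_, ?_⟩, ⟨?_, ?_⟩⟩
  · rintro ⟨A, B, A', B', a, b, δ, a', b', δ', hM, hN, hg⟩
    exact ⟨A, B, A', B', a, b, δ, a', b', δ', hM, hN,
      (Triangle.comp_mor₂_eq_zero_iff hN.1 (a ≫ g)).1 ((Category.assoc a g b').trans hg)⟩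
  · rintro ⟨A, B, A', B', a, b, δ, a', b', δ', hM, hN, hlift⟩
    exact ⟨A, B, A', B', a, b, δ, a', b', δ', hM, hN,
      (Category.assoc a g b').symm.trans ((Triangle.comp_mor₂_eq_zero_iff hN.1 (a ≫ g)).2 hlift)⟩
  · rintro ⟨A, B, A', B', a, b, δ, a', b', δ', hM, hN, hg⟩
    exact ⟨A, B, A', B', a, b, δ, a', b', δ', hM, hN,
      (Triangle.mor₁_comp_eq_zero_iff hM.1 (g ≫ b')).1 hg⟩
  · rintro ⟨A, B, A', B', a, b, δ, a', b', δ', hM, hN, hext⟩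
    exact ⟨A, B, A', B', a, b, δ, a', b', δ', hM, hN,
      (Triangle.mor₁_comp_eq_zero_iff hM.1 (g ≫ b')).2 hext⟩
end

section
/- Let w be a weight structure on a triangulated category C and m ≤ n integers. The class of morphisms killing weights m,…,n forms a two-sided ideal: if g : M → N kills weights m,…,n, then for any h : N → O and h' : O' → M, both h∘g and g∘h' kill weights m,…,n. -/
open CategoryTheory Limits Pretriangulated

namespace CategoryTheory.Pretriangulated

lemma Triangle.mk_comp_iso_distinguished {C : Type*} [Category C] [Preadditive C]
    [HasZeroObject C] [HasShift C ℤ] [∀ n : ℤ, (CategoryTheory.shiftFunctor C n).Additive]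
    [Pretriangulated C] (T : Triangle C) (hT : T ∈ distTriang C) {M : C} (e : T.obj₂ ≅ M) :
    Triangle.mk (T.mor₁ ≫ e.hom) (e.inv ≫ T.mor₂) T.mor₃ ∈ distTriang C := by
  refine isomorphic_distinguished _ hT _
    (Triangle.isoMk _ _ (Iso.refl _) e.symm (Iso.refl _) ?_ ?_ ?_) <;> dsimp [Triangle.mk] <;> simp

end CategoryTheory.Pretriangulated

namespace WeightStructure

variable {C : Type*} [Category C] [Preadditive C] [HasZeroObject C]
  [HasShift C ℤ] [∀ n : ℤ, (CategoryTheory.shiftFunctor C n).Additive] [Pretriangulated C]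
  (w : WeightStructure C)

lemma mem_le_of_iso {X Y : C} (e : X ≅ Y) (hY : Y ∈ w.le) : X ∈ w.le :=
  w.le_retract hY e.hom e.inv e.hom_inv_id

lemma mem_ge_of_iso {X Y : C} (e : X ≅ Y) (hY : Y ∈ w.ge) : X ∈ w.ge :=
  w.ge_retract hY e.hom e.inv e.hom_inv_id

lemma hom_eq_zero_of_mem_Le_of_mem_Ge (k : ℤ) {X Y : C} (hX : X ∈ w.Le k)
    (hY : Y ∈ w.Ge (k + 1)) (f : X ⟶ Y) : f = 0 := by
  let e := (shiftFunctorAdd' C (-(k + 1)) 1 (-k) (by ring)).app Y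
  apply (shiftFunctor C (-k)).map_injective
  rw [Functor.map_zero, ← cancel_mono e.hom, zero_comp]
  exact w.orth hX hY _

/-- Shift a weight decomposition of `M⟦-k⟧` by `k`. -/
lemma exists_isWeightDecomp (k : ℤ) (M : C) :
    ∃ (A B : C) (a : A ⟶ M) (b : M ⟶ B) (δ : B ⟶ A⟦(1 : ℤ)⟧), w.IsWeightDecomp k a b δ := by
  obtain ⟨L, R, f, g, δ, hT, hL, hR⟩ := w.decomp (M⟦-k⟧)
  let T := (shiftFunctor (Triangle C) k).obj (Triangle.mk f g δ)
  let e : T.obj₂ ≅ M := (shiftFunctorCompIsoId C (-k) k (by ring)).app M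
  refine ⟨L⟦k⟧, R⟦k⟧, T.mor₁ ≫ e.hom, e.inv ≫ T.mor₂, T.mor₃,
    Triangle.mk_comp_iso_distinguished T (Triangle.shift_distinguished _ hT k) e, ?_, ?_⟩
  · exact w.mem_le_of_iso ((shiftFunctorCompIsoId C k (-k) (by ring)).app L) hL
  · exact w.mem_ge_of_iso ((shiftFunctorAdd' C k (-(k + 1)) (-1) (by ring)).app R).symm hR

variable {w}

/-- `a ≫ g` factors through `w_{≤ m-1} N`, which has no maps to `w_{≥ m} O`. -/
lemma KillsWeights.comp_right {m n : ℤ} {M N O : C} {g : M ⟶ N} (hg : w.KillsWeights m n g)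
    (h : N ⟶ O) : w.KillsWeights m n (g ≫ h) := by
  obtain ⟨A, B, A', B', a, b, δ, a', b', δ', hM, hN, hz⟩ := hg
  obtain ⟨A'', B'', a'', b'', δ'', hO⟩ := w.exists_isWeightDecomp (m - 1) O
  obtain ⟨φ, hφ⟩ : ∃ φ : A ⟶ A', a ≫ g = φ ≫ a' :=
    Triangle.coyoneda_exact₂ _ hN.1 (a ≫ g) ((Category.assoc _ _ _).trans hz)
  have h_orth : a' ≫ h ≫ b'' = 0 :=
    w.hom_eq_zero_of_mem_Le_of_mem_Ge (m - 1) hN.2.1 hO.2.2 _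
  refine ⟨A, B, A'', B'', a, b, δ, a'', b'', δ'', hM, hO, ?_⟩
  rw [Category.assoc, reassoc_of% hφ, h_orth, comp_zero]

/-- `g ≫ b'` factors through `w_{≥ n+1} M`, which receives no maps from `w_{≤ n} O'`. -/
lemma KillsWeights.comp_left {m n : ℤ} {O' M N : C} {g : M ⟶ N} (hg : w.KillsWeights m n g)
    (h' : O' ⟶ M) : w.KillsWeights m n (h' ≫ g) := by
  obtain ⟨A, B, A', B', a, b, δ, a', b', δ', hM, hN, hz⟩ := hg
  obtain ⟨A'', B'', a'', b'', δ'', hO'⟩ := w.exists_isWeightDecomp n O'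
  obtain ⟨ψ, hψ⟩ : ∃ ψ : B ⟶ B', g ≫ b' = b ≫ ψ :=
    Triangle.yoneda_exact₂ _ hM.1 (g ≫ b') hz
  have h_orth : a'' ≫ h' ≫ b = 0 := w.hom_eq_zero_of_mem_Le_of_mem_Ge n hO'.2.1 hM.2.2 _
  refine ⟨A'', B'', A', B', a'', b'', δ'', a', b', δ', hO', hN, ?_⟩
  rw [Category.assoc, hψ, reassoc_of% h_orth, zero_comp]

end WeightStructure

/-- morphisms killing weights `m,…,n` form a two-sided ideal. -/
theorem killsWeights_ideal {C : Type*} [Category C] [Preadditive C] [HasZeroObject C]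
    [HasShift C ℤ] [∀ n : ℤ, (CategoryTheory.shiftFunctor C n).Additive] [Pretriangulated C]
    (w : WeightStructure C) (m n : ℤ) (hmn : m ≤ n) {M N : C} (g : M ⟶ N)
    (hg : w.KillsWeights m n g) :
    (∀ (O : C) (h : N ⟶ O), w.KillsWeights m n (g ≫ h)) ∧
      (∀ (O' : C) (h' : O' ⟶ M), w.KillsWeights m n (h' ≫ g)) :=
  ⟨fun _ h => hg.comp_right h, fun _ h' => hg.comp_left h'⟩
end

section
/- Let w be a weight structure on a triangulated category C, m ≤ n integers, and O an object of C. Suppose there exists a distinguished triangle X → O → Y → X[1] with X ∈ C_{w≤m-1} and Y ∈ C_{w≥n+1} (a decomposition of O avoiding weights m,…,n). Then: (a) this triangle is simultaneously an l-weight decomposition of O for every integer l with m−1 ≤ l ≤ n; (b) O is without weights m,…,n; and (c) the triangle is unique up to a canonical isomorphism. -/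
open CategoryTheory Limits Pretriangulated

/-! Orthogonality turns a distinguished triangle `X → O → Y → X⟦1⟧` with `X` of weights `≤ m - 1`
and `Y` of weights `≥ n + 1` into bijections `Hom(Z, X) ≃ Hom(Z, O)` for `Z` of weights `≤ m - 1`
and `Hom(Y, W) ≃ Hom(O, W)` for `W` of weights `≥ n + 1`. Applied to the sources and targets of
two such triangles, these bijections produce mutually inverse comparison maps, unique as such. -/

namespace CategoryTheory

variable {C : Type*} [Category C]

def isoOfMutualLifts {X X' O : C} {a : X ⟶ O} {a' : X' ⟶ O} {φ : X ⟶ X'} {φ' : X' ⟶ X}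
    (hφ : φ ≫ a' = a) (hφ' : φ' ≫ a = a') (ha : ∀ g₁ g₂ : X ⟶ X, g₁ ≫ a = g₂ ≫ a → g₁ = g₂)
    (ha' : ∀ g₁ g₂ : X' ⟶ X', g₁ ≫ a' = g₂ ≫ a' → g₁ = g₂) : X ≅ X' where
  hom := φ
  inv := φ'
  hom_inv_id := ha _ _ (by rw [Category.assoc, hφ', hφ, Category.id_comp])
  inv_hom_id := ha' _ _ (by rw [Category.assoc, hφ, hφ', Category.id_comp])

def isoOfMutualDescs {Y Y' O : C} {b : O ⟶ Y} {b' : O ⟶ Y'} {ψ : Y ⟶ Y'} {ψ' : Y' ⟶ Y}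
    (hψ : b ≫ ψ = b') (hψ' : b' ≫ ψ' = b) (hb : ∀ g₁ g₂ : Y ⟶ Y, b ≫ g₁ = b ≫ g₂ → g₁ = g₂)
    (hb' : ∀ g₁ g₂ : Y' ⟶ Y', b' ≫ g₁ = b' ≫ g₂ → g₁ = g₂) : Y ≅ Y' where
  hom := ψ
  inv := ψ'
  hom_inv_id := hb _ _ (by rw [reassoc_of% hψ, hψ', Category.comp_id])
  inv_hom_id := hb' _ _ (by rw [reassoc_of% hψ', hψ, Category.comp_id])

end CategoryTheory

namespace WeightStructure

variable {C : Type*} [Category C] [Preadditive C] [HasZeroObject C]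
  [HasShift C ℤ] [∀ n : ℤ, (CategoryTheory.shiftFunctor C n).Additive] [Pretriangulated C]
  (w : WeightStructure C)

lemma mem_le_of_iso_s12 {A B : C} (e : A ≅ B) (h : B ∈ w.le) : A ∈ w.le :=
  w.le_retract h e.hom e.inv e.hom_inv_id

lemma mem_ge_of_iso_s12 {A B : C} (e : A ≅ B) (h : B ∈ w.ge) : A ∈ w.ge :=
  w.ge_retract h e.hom e.inv e.hom_inv_id

lemma monotone_Le : Monotone w.Le := by
  refine monotone_int_of_le_succ fun k A hA => ?_
  exact w.mem_le_of_iso_s12 ((shiftFunctorAdd' C (-k) (-1) (-(k + 1)) (by ring)).app A)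
    (w.le_shift hA)

lemma antitone_Ge : Antitone w.Ge := by
  refine antitone_int_of_succ_le fun k A hA => ?_
  exact w.mem_ge_of_iso_s12 ((shiftFunctorAdd' C (-(k + 1)) 1 (-k) (by ring)).app A)
    (w.ge_shift hA)

lemma shift_one_mem_Le {A : C} {k : ℤ} (h : A ∈ w.Le k) : A⟦(1 : ℤ)⟧ ∈ w.Le (k + 1) :=
  w.mem_le_of_iso_s12 ((shiftFunctorAdd' C (1 : ℤ) (-(k + 1)) (-k) (by ring)).app A).symm h

lemma shift_neg_one_mem_Ge {A : C} {k : ℤ} (h : A ∈ w.Ge k) : A⟦(-1 : ℤ)⟧ ∈ w.Ge (k - 1) :=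
  w.mem_ge_of_iso_s12 ((shiftFunctorAdd' C (-1 : ℤ) (-(k - 1)) (-k) (by ring)).app A).symm h

lemma eq_zero_of_mem_Le_of_mem_Ge {A B : C} {k l : ℤ} (hA : A ∈ w.Le k) (hB : B ∈ w.Ge l)
    (hkl : k < l) (f : A ⟶ B) : f = 0 := by
  let e := (shiftFunctorAdd' C (-(k + 1)) 1 (-k) (by ring)).app B
  have : (shiftFunctor C (-k)).map f ≫ e.hom = 0 := w.orth hA (w.antitone_Ge (by omega) hB) _
  apply (shiftFunctor C (-k)).map_injective
  rw [Functor.map_zero, ← cancel_mono e.hom, this, zero_comp]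

section Triangle

variable {X O Y : C} {a : X ⟶ O} {b : O ⟶ Y} {δ : Y ⟶ X⟦(1 : ℤ)⟧} {k l : ℤ}

lemma exists_lift (hd : Triangle.mk a b δ ∈ distTriang C) {Z : C}
    (hZ : Z ∈ w.Le k) (hY : Y ∈ w.Ge l) (hkl : k < l) (f : Z ⟶ O) :
    ∃ φ : Z ⟶ X, φ ≫ a = f := by
  obtain ⟨φ, hφ⟩ := Triangle.coyoneda_exact₂ _ hd f (w.eq_zero_of_mem_Le_of_mem_Ge hZ hY hkl _)
  exact ⟨φ, hφ.symm⟩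

lemma lift_ext (hd : Triangle.mk a b δ ∈ distTriang C) {Z : C} (hZ : Z ∈ w.Le k)
    (hY : Y ∈ w.Ge l) (hkl : k + 1 < l) {φ₁ φ₂ : Z ⟶ X} (h : φ₁ ≫ a = φ₂ ≫ a) : φ₁ = φ₂ := by
  have hsub : (φ₁ - φ₂) ≫ a = 0 := by rw [Preadditive.sub_comp, h, sub_self]
  obtain ⟨g, hg⟩ := Triangle.coyoneda_exact₂ _ (inv_rot_of_distTriang _ hd) _ hsub
  rw [← sub_eq_zero, hg,
    w.eq_zero_of_mem_Le_of_mem_Ge hZ (w.shift_neg_one_mem_Ge hY) (by omega) g]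
  exact zero_comp

lemma exists_desc (hd : Triangle.mk a b δ ∈ distTriang C) {W : C}
    (hX : X ∈ w.Le k) (hW : W ∈ w.Ge l) (hkl : k < l) (f : O ⟶ W) :
    ∃ ψ : Y ⟶ W, b ≫ ψ = f := by
  obtain ⟨ψ, hψ⟩ := Triangle.yoneda_exact₂ _ hd f (w.eq_zero_of_mem_Le_of_mem_Ge hX hW hkl _)
  exact ⟨ψ, hψ.symm⟩

lemma desc_ext (hd : Triangle.mk a b δ ∈ distTriang C) {W : C} (hX : X ∈ w.Le k)
    (hW : W ∈ w.Ge l) (hkl : k + 1 < l) {ψ₁ ψ₂ : Y ⟶ W} (h : b ≫ ψ₁ = b ≫ ψ₂) : ψ₁ = ψ₂ := by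
  have hsub : b ≫ (ψ₁ - ψ₂) = 0 := by rw [Preadditive.comp_sub, h, sub_self]
  obtain ⟨g, hg⟩ := Triangle.yoneda_exact₃ _ hd _ hsub
  rw [← sub_eq_zero, hg, w.eq_zero_of_mem_Le_of_mem_Ge (w.shift_one_mem_Le hX) hW (by omega) g]
  exact comp_zero

end Triangle

end WeightStructure

/-- a decomposition avoiding weights `m,…,n` is an `l`-weight decomposition
for all `m-1 ≤ l ≤ n`, shows that `O` is without weights `m,…,n`, and is unique up to a
canonical isomorphism. -/
theorem decomposition_avoiding_weights {C : Type*} [Category C] [Preadditive C] [HasZeroObject C]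
    [HasShift C ℤ] [∀ n : ℤ, (CategoryTheory.shiftFunctor C n).Additive] [Pretriangulated C]
    (w : WeightStructure C) (m n : ℤ) (hmn : m ≤ n) {O X Y : C}
    (a : X ⟶ O) (b : O ⟶ Y) (δ : Y ⟶ X⟦(1 : ℤ)⟧)
    (hdist : Triangle.mk a b δ ∈ distTriang C)
    (hX : X ∈ w.Le (m - 1)) (hY : Y ∈ w.Ge (n + 1)) :
    (∀ l : ℤ, m - 1 ≤ l → l ≤ n → w.IsWeightDecomp l a b δ) ∧
    w.WithoutWeights m n O ∧
    (∀ (X' Y' : C) (a' : X' ⟶ O) (b' : O ⟶ Y') (δ' : Y' ⟶ X'⟦(1 : ℤ)⟧),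
      (Triangle.mk a' b' δ' ∈ distTriang C) → X' ∈ w.Le (m - 1) → Y' ∈ w.Ge (n + 1) →
      ∃ (φ : X ≅ X') (ψ : Y ≅ Y'),
        (φ.hom ≫ a' = a ∧ b ≫ ψ.hom = b') ∧
        ∀ (φ' : X ⟶ X') (ψ' : Y ⟶ Y'), φ' ≫ a' = a → b ≫ ψ' = b' →
          φ' = φ.hom ∧ ψ' = ψ.hom) := by
  have decomp (l : ℤ) (h₁ : m - 1 ≤ l) (h₂ : l ≤ n) : w.IsWeightDecomp l a b δ :=
    ⟨hdist, w.monotone_Le h₁ hX, w.antitone_Ge (by omega) hY⟩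
  refine ⟨decomp, ⟨X, Y, X, Y, a, b, δ, a, b, δ, decomp n (by omega) le_rfl,
    decomp (m - 1) le_rfl (by omega),
    (Category.id_comp b).symm ▸ comp_distTriang_mor_zero₁₂ _ hdist⟩, ?_⟩
  intro X' Y' a' b' δ' hdist' hX' hY'
  have hlt : m - 1 + 1 < n + 1 := by omega
  obtain ⟨φ, hφ⟩ := w.exists_lift hdist' hX hY' (by omega) a
  obtain ⟨φ', hφ'⟩ := w.exists_lift hdist hX' hY (by omega) a'
  obtain ⟨ψ, hψ⟩ := w.exists_desc hdist hX hY' (by omega) b'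
  obtain ⟨ψ', hψ'⟩ := w.exists_desc hdist' hX' hY (by omega) b
  refine ⟨isoOfMutualLifts hφ hφ' (fun _ _ => w.lift_ext hdist hX hY hlt)
      (fun _ _ => w.lift_ext hdist' hX' hY' hlt),
    isoOfMutualDescs hψ hψ' (fun _ _ => w.desc_ext hdist hX hY hlt)
      (fun _ _ => w.desc_ext hdist' hX' hY' hlt),
    ⟨hφ, hψ⟩, fun φ₁ ψ₁ h₁ h₂ => ⟨?_, ?_⟩⟩
  · exact w.lift_ext hdist' hX hY' hlt (h₁.trans hφ.symm)
  · exact w.desc_ext hdist hX hY' hlt (h₂.trans hψ.symm)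
end
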